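/- arXiv:2002.12563 — 3 statements merged into one kernel-verified Lean document; each statement's English description precedes it below -/
import Mathlib

section
/- Under the data model and the output-weight assumption, if for each i ∈ [n] the matrix W_i^* ∈ V_i^k (all columns in V_i) minimizes l_i over V_i^k, then W^* = Σ_{i=1}^n W_i^* minimizes the total population loss l over all of ℝ^{d×k}. -/
open MeasureTheory Finset RealInnerProductSpace

noncomputable section

set_option linter.unusedVariables false

/-- Output coordinate `i` of the one-hidden-layer ReLU network with hidden weights `W`
(columns `W j`), biases `b` and output weights `v`:  `f_i(W;x) = ∑_j v_{i,j} σ(⟨w_j,x⟩ - b_j)`. -/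
def netOut {d n k : ℕ} (v : Fin n → Fin k → ℝ) (b : Fin k → ℝ)
    (W : Fin k → EuclideanSpace ℝ (Fin d)) (x : EuclideanSpace ℝ (Fin d)) (i : Fin n) : ℝ :=
  ∑ j, v i j * max (⟪W j, x⟫ - b j) 0

/-- Hinge loss of the sample `(x, y)`:  `l(W;{x,y}) = ∑_{i ≠ y} max{0, 1 - f_y + f_i}`. -/
def hingeLoss {d n k : ℕ} (v : Fin n → Fin k → ℝ) (b : Fin k → ℝ)
    (W : Fin k → EuclideanSpace ℝ (Fin d)) (x : EuclideanSpace ℝ (Fin d)) (y : Fin n) : ℝ :=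
  ∑ i ∈ univ.filter (· ≠ y), max 0 (1 - netOut v b W x y + netOut v b W x i)

/-- Class-`i` population loss `l_i(W) = E_{(x,y)∼D_i}[l(W;{x,y})]` (under `D_i` the label is
almost surely `i`, so `D_i` is recorded as a measure on the inputs). -/
def popLoss {d n k : ℕ} (D : Measure (EuclideanSpace ℝ (Fin d))) (v : Fin n → Fin k → ℝ)
    (b : Fin k → ℝ) (i : Fin n) (W : Fin k → EuclideanSpace ℝ (Fin d)) : ℝ :=
  ∫ x, hingeLoss v b W x i ∂D

/-- The explicit column-wise gradient formula
`∇_{w_j} l_i(W) = -∑_{r≠i} (v_{i,j}-v_{r,j}) E[1_{Ω_{i,r}(W)} 1_{Ω_{w_j}} x]`. -/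
def gradCol {d n k : ℕ} (D : Measure (EuclideanSpace ℝ (Fin d))) (v : Fin n → Fin k → ℝ)
    (b : Fin k → ℝ) (i : Fin n) (W : Fin k → EuclideanSpace ℝ (Fin d)) (j : Fin k) :
    EuclideanSpace ℝ (Fin d) :=
  -∑ r ∈ univ.filter (· ≠ i), (v i j - v r j) •
    ∫ x in {x | netOut v b W x i < netOut v b W x r + 1} ∩ {x | b j < ⟪W j, x⟫}, x ∂D

/-- Total population loss `l = (1/n) ∑ᵢ lᵢ`. -/
def totalLoss {d n k : ℕ} (D : Fin n → Measure (EuclideanSpace ℝ (Fin d)))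
    (v : Fin n → Fin k → ℝ) (b : Fin k → ℝ) (W : Fin k → EuclideanSpace ℝ (Fin d)) : ℝ :=
  (n : ℝ)⁻¹ * ∑ i, popLoss (D i) v b i W

/-- Column `j` of the gradient of the total population loss, `∇l(W) = (1/n) ∑ᵢ ∇lᵢ(W)`. -/
def gradTotal {d n k : ℕ} (D : Fin n → Measure (EuclideanSpace ℝ (Fin d)))
    (v : Fin n → Fin k → ℝ) (b : Fin k → ℝ) (W : Fin k → EuclideanSpace ℝ (Fin d)) (j : Fin k) :
    EuclideanSpace ℝ (Fin d) :=
  (n : ℝ)⁻¹ • ∑ i, gradCol (D i) v b i W j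

/-- `|W|`: the sum of the Euclidean norms of the columns of `W`. -/
def matNorm {d k : ℕ} (W : Fin k → EuclideanSpace ℝ (Fin d)) : ℝ := ∑ j, ‖W j‖

/-- The misclassification event `{x : ŷ(W;x) ≠ i}`: `i` is not the (unique) argmax of the
network output at `x`. -/
def misclass {d n k : ℕ} (v : Fin n → Fin k → ℝ) (b : Fin k → ℝ)
    (W : Fin k → EuclideanSpace ℝ (Fin d)) (i : Fin n) : Set (EuclideanSpace ℝ (Fin d)) :=
  {x | ¬ ∀ r, r ≠ i → netOut v b W x r < netOut v b W x i}

/-- The geometric condition for a set `s` of (unit) vectors: the origin lies in the interior of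
the convex hull of `s`. -/
def geomCond {d : ℕ} (s : Set (EuclideanSpace ℝ (Fin d))) : Prop :=
  (0 : EuclideanSpace ℝ (Fin d)) ∈ interior (convexHull ℝ s)

/-- The set of normalized weight columns `w_j/|w_j|` over the neurons `j` with `v_{i,j} > 0`. -/
def posNeurons {d n k : ℕ} (v : Fin n → Fin k → ℝ) (i : Fin n)
    (W : Fin k → EuclideanSpace ℝ (Fin d)) : Set (EuclideanSpace ℝ (Fin d)) :=
  {y | ∃ j, 0 < v i j ∧ (‖W j‖)⁻¹ • W j = y}

/-!
The class-`i` loss only sees the network through the inner products `⟪w_j, x⟫` with inputs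
`x ∈ V_i`. Hence `l_i` is unchanged when every column is replaced by its orthogonal projection
onto `V_i`, so the minimum of `l_i` over `V_i^k` is its global minimum; and by orthogonality of
the `V_r`, `l_i(∑_r W_r^*) = l_i(W_i^*)`. Thus `W^*` minimizes every `l_i`, hence their average.
-/

section LossCongr

variable {d n k : ℕ} (D : Measure (EuclideanSpace ℝ (Fin d))) (v : Fin n → Fin k → ℝ)
  (b : Fin k → ℝ) (i : Fin n)

lemma netOut_congr {W W' : Fin k → EuclideanSpace ℝ (Fin d)} {x : EuclideanSpace ℝ (Fin d)}
    (h : ∀ j, ⟪W j, x⟫ = ⟪W' j, x⟫) : netOut v b W x = netOut v b W' x := by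
  ext r
  simp only [netOut, h]

lemma popLoss_congr_ae {W W' : Fin k → EuclideanSpace ℝ (Fin d)}
    (h : ∀ᵐ x ∂D, ∀ j, ⟪W j, x⟫ = ⟪W' j, x⟫) : popLoss D v b i W = popLoss D v b i W' := by
  refine integral_congr_ae ?_
  filter_upwards [h] with x hx
  simp only [hingeLoss, netOut_congr v b hx]

lemma popLoss_starProjection (K : Submodule ℝ (EuclideanSpace ℝ (Fin d)))
    (hK : ∀ᵐ x ∂D, x ∈ K) (W : Fin k → EuclideanSpace ℝ (Fin d)) :
    popLoss D v b i (fun j => K.starProjection (W j)) = popLoss D v b i W := by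
  refine popLoss_congr_ae D v b i ?_
  filter_upwards [hK] with x hx j
  have h := K.starProjection_inner_eq_zero (W j) x hx
  rw [inner_sub_left] at h
  linarith

lemma popLoss_sum_of_orthogonal (V : Fin n → Submodule ℝ (EuclideanSpace ℝ (Fin d)))
    (horth : ∀ i j : Fin n, i ≠ j → ∀ x ∈ V i, ∀ y ∈ V j, ⟪x, y⟫ = 0)
    (hi : ∀ᵐ x ∂D, x ∈ V i) (W : Fin n → Fin k → EuclideanSpace ℝ (Fin d))
    (hW : ∀ r j, W r j ∈ V r) :
    popLoss D v b i (fun j => ∑ r, W r j) = popLoss D v b i (W i) := by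
  refine popLoss_congr_ae D v b i ?_
  filter_upwards [hi] with x hx j
  rw [sum_inner, Finset.sum_eq_single i (fun r _ hr => horth r i hr _ (hW r j) x hx) (by simp)]

lemma popLoss_le_of_le_on_submodule (K : Submodule ℝ (EuclideanSpace ℝ (Fin d)))
    (hK : ∀ᵐ x ∂D, x ∈ K) {W₀ : Fin k → EuclideanSpace ℝ (Fin d)}
    (hmin : ∀ W : Fin k → EuclideanSpace ℝ (Fin d), (∀ j, W j ∈ K) →
      popLoss D v b i W₀ ≤ popLoss D v b i W)
    (W : Fin k → EuclideanSpace ℝ (Fin d)) : popLoss D v b i W₀ ≤ popLoss D v b i W :=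
  popLoss_starProjection D v b i K hK W ▸
    hmin _ fun j => K.starProjection_apply_mem (W j)

end LossCongr

lemma ae_mem_of_measure_eq_one {α : Type*} [MeasurableSpace α] {μ : Measure α}
    [IsProbabilityMeasure μ] {s : Set α} (hs : NullMeasurableSet s μ) (h : μ s = 1) :
    ∀ᵐ x ∂μ, x ∈ s :=
  (ae_mem_iff_measure_eq hs).2 (by rw [h, measure_univ])

theorem decompose_min_general {d n k : ℕ}
    -- Data model: orthogonal subspaces spanning the whole space, class-`i` data supported on `V i`
    (V : Fin n → Submodule ℝ (EuclideanSpace ℝ (Fin d)))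
    (horth : ∀ i j : Fin n, i ≠ j → ∀ x ∈ V i, ∀ y ∈ V j, ⟪x, y⟫ = 0)
    (D : Fin n → Measure (EuclideanSpace ℝ (Fin d)))
    (hprob : ∀ i, IsProbabilityMeasure (D i))
    (hsupport : ∀ i, D i (V i) = 1)
    (v : Fin n → Fin k → ℝ)
    (b : Fin k → ℝ)
    (Wstar : Fin n → Fin k → EuclideanSpace ℝ (Fin d))
    (hWmem : ∀ i j, Wstar i j ∈ V i)
    (hWmin : ∀ i, ∀ W' : Fin k → EuclideanSpace ℝ (Fin d), (∀ j, W' j ∈ V i) →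
      popLoss (D i) v b i (Wstar i) ≤ popLoss (D i) v b i W') :
    ∀ W' : Fin k → EuclideanSpace ℝ (Fin d),
      totalLoss D v b (fun j => ∑ i, Wstar i j) ≤ totalLoss D v b W' := by
  intro W'
  unfold totalLoss
  gcongr with i
  have hVi : ∀ᵐ x ∂D i, x ∈ V i :=
    ae_mem_of_measure_eq_one (Submodule.closed_of_finiteDimensional (V i)).nullMeasurableSet
      (hsupport i)
  rw [popLoss_sum_of_orthogonal (D i) v b i V horth hVi Wstar hWmem]
  exact popLoss_le_of_le_on_submodule (D i) v b i (V i) hVi (hWmin i) W'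

/-- Lemma (decomposition, part 1): if `W_i^*` (with all columns in `V i`) minimizes `l_i` over
`V_i^k` for each `i`, then `W^* = ∑ᵢ W_i^*` minimizes the total loss `l` over all matrices. -/
theorem decompose_min {d n k : ℕ} (hn : 2 ≤ n)
    -- Data model: orthogonal subspaces spanning the whole space, class-`i` data supported on `V i`
    (V : Fin n → Submodule ℝ (EuclideanSpace ℝ (Fin d)))
    (horth : ∀ i j : Fin n, i ≠ j → ∀ x ∈ V i, ∀ y ∈ V j, ⟪x, y⟫ = 0)
    (hspan : (⨆ i, V i) = ⊤)
    (D : Fin n → Measure (EuclideanSpace ℝ (Fin d)))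
    (hprob : ∀ i, IsProbabilityMeasure (D i))
    (hsupport : ∀ i, D i (V i) = 1)
    -- Output-weight assumption
    (v : Fin n → Fin k → ℝ) (c : ℝ) (hc : 0 < c)
    (hv1 : ∀ i : Fin n, ∃ j, 0 < v i j)
    (hv2 : ∀ (i : Fin n) (j : Fin k), 0 < v i j → ∀ r, r ≠ i → v r j < 0)
    (hv3 : ∀ i j, |v i j| = c)
    (b : Fin k → ℝ) (hb : ∀ j, 0 ≤ b j)
    (Wstar : Fin n → Fin k → EuclideanSpace ℝ (Fin d))
    (hWmem : ∀ i j, Wstar i j ∈ V i)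
    (hWmin : ∀ i, ∀ W' : Fin k → EuclideanSpace ℝ (Fin d), (∀ j, W' j ∈ V i) →
      popLoss (D i) v b i (Wstar i) ≤ popLoss (D i) v b i W') :
    ∀ W' : Fin k → EuclideanSpace ℝ (Fin d),
      totalLoss D v b (fun j => ∑ i, Wstar i j) ≤ totalLoss D v b W' :=
  decompose_min_general V horth D hprob hsupport v b Wstar hWmem hWmin
end
end

section
/- Under the data model and the output-weight assumption, fix i ∈ [n], W ∈ ℝ^{d×k}, and η > 0, and let W' = W − η∇l_i(W), where ∇l_i is given by the explicit gradient formula. Then for every r ≠ i, l(W'; {x,r}) = l(W; {x,r}) for D_r-almost all (x,r). -/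
open MeasureTheory Finset RealInnerProductSpace

noncomputable section

set_option linter.unusedVariables false

/-! The gradient of `l_i` is a combination of integrals of `x` against `D_i`, which is supported
on `V_i`; so every column of the gradient is orthogonal to `V_r`. A gradient step therefore leaves
every pre-activation `⟨w_j, x⟩` with `x ∈ V_r` unchanged, and with it the network output and the
hinge loss on class-`r` data. -/

theorem inner_integral_eq_zero_of_ae {α E : Type*} [MeasurableSpace α] {μ : Measure α}
    [NormedAddCommGroup E] [InnerProductSpace ℝ E] [CompleteSpace E] {f : α → E} {x : E}
    (h : ∀ᵐ a ∂μ, ⟪f a, x⟫ = 0) : ⟪∫ a, f a ∂μ, x⟫ = 0 := by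
  by_cases hf : Integrable f μ
  · rw [real_inner_comm, ← integral_inner hf]
    exact integral_eq_zero_of_ae (h.mono fun a ha => (real_inner_comm _ _).trans ha)
  · rw [integral_undef hf, inner_zero_left]

theorem ae_mem_submodule_of_measure_eq_one {E : Type*} [NormedAddCommGroup E]
    [NormedSpace ℝ E] [FiniteDimensional ℝ E] [MeasurableSpace E] [OpensMeasurableSpace E]
    {μ : Measure E} [IsProbabilityMeasure μ] {V : Submodule ℝ E} (hV : μ V = 1) :
    ∀ᵐ x ∂μ, x ∈ V :=
  (mem_ae_iff_prob_eq_one V.closed_of_finiteDimensional.measurableSet).2 hV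

section Network

variable {d n k : ℕ} (v : Fin n → Fin k → ℝ) (b : Fin k → ℝ)

theorem inner_gradCol_eq_zero {D : Measure (EuclideanSpace ℝ (Fin d))}
    {x : EuclideanSpace ℝ (Fin d)} (hx : ∀ᵐ z ∂D, ⟪z, x⟫ = 0) (i : Fin n)
    (W : Fin k → EuclideanSpace ℝ (Fin d)) (j : Fin k) : ⟪gradCol D v b i W j, x⟫ = 0 := by
  simp only [gradCol, inner_neg_left, sum_inner, real_inner_smul_left,
    inner_integral_eq_zero_of_ae (ae_restrict_of_ae hx), mul_zero, sum_const_zero, neg_zero]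

theorem netOut_congr_inner {W W' : Fin k → EuclideanSpace ℝ (Fin d)}
    {x : EuclideanSpace ℝ (Fin d)} (h : ∀ j, ⟪W' j, x⟫ = ⟪W j, x⟫) :
    netOut v b W' x = netOut v b W x := by
  funext i
  simp only [netOut, h]

theorem hingeLoss_congr_inner {W W' : Fin k → EuclideanSpace ℝ (Fin d)}
    {x : EuclideanSpace ℝ (Fin d)} (h : ∀ j, ⟪W' j, x⟫ = ⟪W j, x⟫) (y : Fin n) :
    hingeLoss v b W' x y = hingeLoss v b W x y := by
  simp only [hingeLoss, netOut_congr_inner v b h]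

theorem inner_gradient_step_eq {D : Measure (EuclideanSpace ℝ (Fin d))}
    {x : EuclideanSpace ℝ (Fin d)} (hx : ∀ᵐ z ∂D, ⟪z, x⟫ = 0) (i : Fin n) (η : ℝ)
    (W : Fin k → EuclideanSpace ℝ (Fin d)) (j : Fin k) :
    ⟪W j - η • gradCol D v b i W j, x⟫ = ⟪W j, x⟫ := by
  rw [inner_sub_left, real_inner_smul_left, inner_gradCol_eq_zero v b hx, mul_zero, sub_zero]

end Network

theorem decompose_step_general {d n k : ℕ}
    -- Data model: orthogonal subspaces spanning the whole space, class-`i` data supported on `V i`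
    (V : Fin n → Submodule ℝ (EuclideanSpace ℝ (Fin d)))
    (horth : ∀ i j : Fin n, i ≠ j → ∀ x ∈ V i, ∀ y ∈ V j, ⟪x, y⟫ = 0)
    (D : Fin n → Measure (EuclideanSpace ℝ (Fin d)))
    (hprob : ∀ i, IsProbabilityMeasure (D i))
    (hsupport : ∀ i, D i (V i) = 1)
    -- Output-weight assumption
    (v : Fin n → Fin k → ℝ)
    (b : Fin k → ℝ)
    (i : Fin n) (η : ℝ) (W : Fin k → EuclideanSpace ℝ (Fin d)) :
    ∀ r : Fin n, r ≠ i →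
      ∀ᵐ x ∂(D r),
        hingeLoss v b (fun j => W j - η • gradCol (D i) v b i W j) x r = hingeLoss v b W x r := by
  intro r hr
  have hVi : ∀ᵐ z ∂(D i), z ∈ V i := ae_mem_submodule_of_measure_eq_one (hsupport i)
  filter_upwards [ae_mem_submodule_of_measure_eq_one (hsupport r)] with x hx
  have hperp : ∀ᵐ z ∂(D i), ⟪z, x⟫ = 0 := hVi.mono fun z hz => horth i r hr.symm z hz x hx
  exact hingeLoss_congr_inner v b (inner_gradient_step_eq v b hperp i η W) r

/-- Lemma (decomposition, part 2): one gradient step on `l_i` does not change the sample loss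
on class-`r` data for any `r ≠ i`, `D_r`-almost surely. -/
theorem decompose_step {d n k : ℕ} (hn : 2 ≤ n)
    -- Data model: orthogonal subspaces spanning the whole space, class-`i` data supported on `V i`
    (V : Fin n → Submodule ℝ (EuclideanSpace ℝ (Fin d)))
    (horth : ∀ i j : Fin n, i ≠ j → ∀ x ∈ V i, ∀ y ∈ V j, ⟪x, y⟫ = 0)
    (hspan : (⨆ i, V i) = ⊤)
    (D : Fin n → Measure (EuclideanSpace ℝ (Fin d)))
    (hprob : ∀ i, IsProbabilityMeasure (D i))
    (hsupport : ∀ i, D i (V i) = 1)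
    -- Output-weight assumption
    (v : Fin n → Fin k → ℝ) (c : ℝ) (hc : 0 < c)
    (hv1 : ∀ i : Fin n, ∃ j, 0 < v i j)
    (hv2 : ∀ (i : Fin n) (j : Fin k), 0 < v i j → ∀ r, r ≠ i → v r j < 0)
    (hv3 : ∀ i j, |v i j| = c)
    (b : Fin k → ℝ) (hb : ∀ j, 0 ≤ b j)
    (i : Fin n) (η : ℝ) (hη : 0 < η) (W : Fin k → EuclideanSpace ℝ (Fin d)) :
    ∀ r : Fin n, r ≠ i →
      ∀ᵐ x ∂(D r),
        hingeLoss v b (fun j => W j - η • gradCol (D i) v b i W j) x r = hingeLoss v b W x r :=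
  decompose_step_general V horth D hprob hsupport v b i η W
end
end

section
/- Under the data model, the output-weight assumption, and zero biases b_j = 0, fix i ∈ [n], W ∈ V_i^k with columns w_j, and η > 0, and set w_j' = w_j − η∇_{w_j} l_i(W) (explicit gradient formula). If v_{i,j} > 0, then |w_j'| ≥ |w_j|. -/
open MeasureTheory Finset RealInnerProductSpace

noncomputable section

set_option linter.unusedVariables false

/-! With nonnegative biases, every sample that contributes to `∇_{w_j} l_i` lies in the open
half-space `⟪w_j, x⟫ > 0`, and for `v_{i,j} > 0` every coefficient `v_{i,j} - v_{r,j}` is positive.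
Hence `⟪w_j, ∇_{w_j} l_i⟫ ≤ 0`, and a step against a vector making an obtuse angle with `w_j`
cannot shorten it: `‖w - η g‖² = ‖w‖² - 2η⟪w, g⟫ + η²‖g‖²`. -/

section InnerProductSpace

variable {E : Type*} [NormedAddCommGroup E] [InnerProductSpace ℝ E]

theorem inner_setIntegral_nonneg [CompleteSpace E] {α : Type*} [MeasurableSpace α]
    {μ : Measure α} {s : Set α} (hs : MeasurableSet s) {f : α → E} {c : E}
    (h : ∀ x ∈ s, 0 ≤ ⟪c, f x⟫) : 0 ≤ ⟪c, ∫ x in s, f x ∂μ⟫ := by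
  by_cases hf : Integrable f (μ.restrict s)
  · rw [← integral_inner hf]
    exact setIntegral_nonneg hs h
  · rw [integral_undef hf, inner_zero_right]

theorem norm_le_norm_sub_smul_of_inner_nonpos {w g : E} {η : ℝ} (hwg : ⟪w, g⟫ ≤ 0)
    (hη : 0 ≤ η) : ‖w‖ ≤ ‖w - η • g‖ := by
  have hsq : ‖w - η • g‖ ^ 2 = ‖w‖ ^ 2 - 2 * η * ⟪w, g⟫ + η ^ 2 * ‖g‖ ^ 2 := by
    rw [norm_sub_sq_real, real_inner_smul_right, norm_smul, mul_pow, Real.norm_eq_abs, sq_abs]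
    ring
  refine (pow_le_pow_iff_left₀ (norm_nonneg _) (norm_nonneg _) two_ne_zero).1 ?_
  nlinarith [mul_nonpos_of_nonneg_of_nonpos hη hwg]

end InnerProductSpace

theorem continuous_netOut {d n k : ℕ} (v : Fin n → Fin k → ℝ) (b : Fin k → ℝ)
    (W : Fin k → EuclideanSpace ℝ (Fin d)) (i : Fin n) :
    Continuous fun x => netOut v b W x i := by
  unfold netOut
  fun_prop

theorem inner_gradCol_nonpos {d n k : ℕ} (D : Measure (EuclideanSpace ℝ (Fin d)))
    {v : Fin n → Fin k → ℝ} {b : Fin k → ℝ} {i : Fin n} (W : Fin k → EuclideanSpace ℝ (Fin d))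
    {j : Fin k} (hb : 0 ≤ b j) (hv : ∀ r, r ≠ i → v r j ≤ v i j) :
    ⟪W j, gradCol D v b i W j⟫ ≤ 0 := by
  rw [gradCol, inner_neg_right, neg_nonpos, inner_sum]
  refine sum_nonneg fun r hr => ?_
  rw [real_inner_smul_right]
  refine mul_nonneg (sub_nonneg.2 (hv r (mem_filter.1 hr).2))
    (inner_setIntegral_nonneg ?_ fun x hx => hb.trans hx.2.le)
  exact (measurableSet_lt (continuous_netOut v b W i).measurable
      ((continuous_netOut v b W r).measurable.add_const 1)).inter
    (measurableSet_lt measurable_const (continuous_const.inner continuous_id).measurable)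

theorem pos_neuron_nondecreasing_general {d n k : ℕ}
    (D : Fin n → Measure (EuclideanSpace ℝ (Fin d)))
    -- Output-weight assumption
    (v : Fin n → Fin k → ℝ)
    (hv2 : ∀ (i : Fin n) (j : Fin k), 0 < v i j → ∀ r, r ≠ i → v r j < 0)
    (b : Fin k → ℝ) (hb0 : ∀ j, b j = 0)
    (i : Fin n) (W : Fin k → EuclideanSpace ℝ (Fin d))
    (η : ℝ) (hη : 0 < η) :
    ∀ j, 0 < v i j → ‖W j‖ ≤ ‖W j - η • gradCol (D i) v b i W j‖ := by
  intro j hvij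
  have hv : ∀ r, r ≠ i → v r j ≤ v i j := fun r hr => (hv2 i j hvij r hr).le.trans hvij.le
  exact norm_le_norm_sub_smul_of_inner_nonpos
    (inner_gradCol_nonpos (D i) W (hb0 j).ge hv) hη.le

/-- Lemma (norm growth): with zero biases, a gradient step on `l_i` does not decrease the norm
of any column `w_j` with `v_{i,j} > 0`. -/
theorem pos_neuron_nondecreasing {d n k : ℕ} (hn : 2 ≤ n)
    -- Data model: orthogonal subspaces spanning the whole space, class-`i` data supported on `V i`
    (V : Fin n → Submodule ℝ (EuclideanSpace ℝ (Fin d)))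
    (horth : ∀ i j : Fin n, i ≠ j → ∀ x ∈ V i, ∀ y ∈ V j, ⟪x, y⟫ = 0)
    (hspan : (⨆ i, V i) = ⊤)
    (D : Fin n → Measure (EuclideanSpace ℝ (Fin d)))
    (hprob : ∀ i, IsProbabilityMeasure (D i))
    (hsupport : ∀ i, D i (V i) = 1)
    -- Boundedness of the data: `m_i ≤ |x| ≤ M_i` almost surely
    (m M : Fin n → ℝ) (hm : ∀ i, 0 < m i) (hmM : ∀ i, m i ≤ M i)
    (hbdd : ∀ i, D i {x | m i ≤ ‖x‖ ∧ ‖x‖ ≤ M i} = 1)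
    -- Output-weight assumption
    (v : Fin n → Fin k → ℝ) (c : ℝ) (hc : 0 < c)
    (hv1 : ∀ i : Fin n, ∃ j, 0 < v i j)
    (hv2 : ∀ (i : Fin n) (j : Fin k), 0 < v i j → ∀ r, r ≠ i → v r j < 0)
    (hv3 : ∀ i j, |v i j| = c)
    (b : Fin k → ℝ) (hb0 : ∀ j, b j = 0)
    (i : Fin n) (W : Fin k → EuclideanSpace ℝ (Fin d)) (hWmem : ∀ j, W j ∈ V i)
    (η : ℝ) (hη : 0 < η) :
    ∀ j, 0 < v i j → ‖W j‖ ≤ ‖W j - η • gradCol (D i) v b i W j‖ :=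
  pos_neuron_nondecreasing_general D v hv2 b hb0 i W η hη
end
end
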